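/- Negative-squares bound for the kernel K_{Θ,J}: For any finite family of points z_1,…,z_M ∈ ℂ with Re z_k > 0 and z_kI_n − A invertible for each k, the M(p+m) × M(p+m) block matrix G with (k,l) block G_{kl} := (J − Θ(z_k) J Θ(z_l)ᴴ)/(z_k + conj(z_l)) is Hermitian and has at most ν₋(Γ) negative eigenvalues (counted with multiplicity). -/

import Mathlib

open Matrix
open scoped Matrix

/-- The signature matrix `J = diag(I_p, −I_m)`. -/
def signatureJ (p m : ℕ) : Matrix (Fin p ⊕ Fin m) (Fin p ⊕ Fin m) ℂ :=
  Matrix.fromBlocks 1 0 0 (-1)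

/-- The realization `Θ(λ) = I − C (λI − A)⁻¹ Γ⁻¹ Cᴴ J`. -/
noncomputable def ThetaRealization (n p m : ℕ) (A : Matrix (Fin n) (Fin n) ℂ)
    (C : Matrix (Fin p ⊕ Fin m) (Fin n) ℂ) (Γ : Matrix (Fin n) (Fin n) ℂ) (lam : ℂ) :
    Matrix (Fin p ⊕ Fin m) (Fin p ⊕ Fin m) ℂ :=
  1 - C * (lam • (1 : Matrix (Fin n) (Fin n) ℂ) - A)⁻¹ * Γ⁻¹ * Cᴴ * signatureJ p m

/-- The number of negative eigenvalues (with multiplicity) of a Hermitian matrix. -/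
noncomputable def negEigCount {ι : Type*} [Fintype ι] [DecidableEq ι]
    (H : Matrix ι ι ℂ) (hH : H.IsHermitian) : ℕ :=
  Fintype.card {i // hH.eigenvalues i < 0}

/-!
Put `F(λ) = C (λI − A)⁻¹ Γ⁻¹`, so that `Θ(λ) = I − F(λ) Cᴴ J`. Using `J² = I`, the Lyapunov
identity and the resolvent identities `λ (λI − A)⁻¹ = I + (λI − A)⁻¹ A`, one finds
`J − Θ(z) J Θ(w)ᴴ = (z + conj w) F(z) Γ F(w)ᴴ`. Since `z_k + conj z_l ≠ 0` on the right half-plane,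
the block matrix is the congruence `B Γ Bᴴ`, where `B` stacks the `F(z_k)`.

The number of negative eigenvalues cannot grow under a congruence: the eigenvectors of `B Γ Bᴴ`
with negative eigenvalue span a space on which its form is negative definite, `Bᴴ` maps that space
injectively onto a `Γ`-negative subspace, and such a subspace meets the span of the eigenvectors of
`Γ` with nonnegative eigenvalue trivially, so its dimension is at most `ν₋(Γ)`.
-/

open Module Submodule

namespace Matrix.IsHermitian

variable {𝕜 ι κ : Type*} [RCLike 𝕜] [Fintype ι] [DecidableEq ι] [Fintype κ] [DecidableEq κ]
  {H : Matrix ι ι 𝕜} (hH : H.IsHermitian)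

noncomputable def eigenvectorSpan (P : ι → Prop) : Submodule 𝕜 (ι → 𝕜) :=
  span 𝕜 (Set.range fun j : {j // P j} => ⇑(hH.eigenvectorBasis j))

theorem finrank_eigenvectorSpan (P : ι → Prop) [DecidablePred P] :
    finrank 𝕜 (hH.eigenvectorSpan P) = Fintype.card {j // P j} := by
  have hli : LinearIndependent 𝕜 fun j => ⇑(hH.eigenvectorBasis j) :=
    hH.eigenvectorBasis.orthonormal.linearIndependent.map'
      (WithLp.linearEquiv 2 𝕜 (ι → 𝕜)).toLinearMap (WithLp.linearEquiv 2 𝕜 (ι → 𝕜)).ker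
  exact finrank_span_eq_card (hli.comp _ Subtype.val_injective)

theorem star_eigenvectorUnitary_mulVec_apply_eq_zero {P : ι → Prop} {x : ι → 𝕜}
    (hx : x ∈ hH.eigenvectorSpan P) {i : ι} (hi : ¬ P i) :
    (star (hH.eigenvectorUnitary : Matrix ι ι 𝕜) *ᵥ x) i = 0 := by
  induction hx using Submodule.span_induction with
  | mem _ h =>
    obtain ⟨j, rfl⟩ := h
    rw [star_eigenvectorUnitary_mulVec, Pi.single_eq_of_ne]
    rintro rfl
    exact hi j.2
  | zero => simp
  | add _ _ _ _ hx hy => simp [mulVec_add, hx, hy]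
  | smul _ _ _ hx => simp [mulVec_smul, hx]

theorem re_star_dotProduct_mulVec_eq_sum (x : ι → 𝕜) :
    RCLike.re (star x ⬝ᵥ (H *ᵥ x)) =
      ∑ i, hH.eigenvalues i * ‖(star (hH.eigenvectorUnitary : Matrix ι ι 𝕜) *ᵥ x) i‖ ^ 2 := by
  set U : Matrix ι ι 𝕜 := (hH.eigenvectorUnitary : Matrix ι ι 𝕜)
  have hU : star x ᵥ* U = star (star U *ᵥ x) := by
    rw [star_mulVec, star_eq_conjTranspose, conjTranspose_conjTranspose]
  conv_lhs => rw [hH.spectral_theorem, Unitary.conjStarAlgAut_apply]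
  rw [← mulVec_mulVec, ← mulVec_mulVec, dotProduct_mulVec, hU]
  simp only [dotProduct, mulVec_diagonal, Pi.star_apply, Function.comp_apply, map_sum]
  refine Finset.sum_congr rfl fun i _ => ?_
  rw [mul_left_comm, RCLike.star_def, RCLike.conj_mul]
  norm_cast

theorem re_star_dotProduct_mulVec_neg {x : ι → 𝕜}
    (hx : x ∈ hH.eigenvectorSpan (hH.eigenvalues · < 0)) (hx0 : x ≠ 0) :
    RCLike.re (star x ⬝ᵥ (H *ᵥ x)) < 0 := by
  set y := star (hH.eigenvectorUnitary : Matrix ι ι 𝕜) *ᵥ x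
  have hy0 : y ≠ 0 := fun h => hx0 <| by
    simpa [y, mulVec_mulVec] using congrArg ((hH.eigenvectorUnitary : Matrix ι ι 𝕜) *ᵥ ·) h
  obtain ⟨i, hi⟩ := Function.ne_iff.mp hy0
  have hneg : hH.eigenvalues i < 0 :=
    not_not.mp fun h => hi (hH.star_eigenvectorUnitary_mulVec_apply_eq_zero hx h)
  rw [hH.re_star_dotProduct_mulVec_eq_sum]
  refine Finset.sum_neg' (fun j _ => ?_) ⟨i, Finset.mem_univ _, ?_⟩
  · by_cases hj : hH.eigenvalues j < 0
    · exact mul_nonpos_of_nonpos_of_nonneg hj.le (sq_nonneg _)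
    · simp [hH.star_eigenvectorUnitary_mulVec_apply_eq_zero hx hj]
  · exact mul_neg_of_neg_of_pos hneg (pow_pos (norm_pos_iff.mpr hi) 2)

theorem re_star_dotProduct_mulVec_nonneg {x : ι → 𝕜}
    (hx : x ∈ hH.eigenvectorSpan (¬ hH.eigenvalues · < 0)) :
    0 ≤ RCLike.re (star x ⬝ᵥ (H *ᵥ x)) := by
  rw [hH.re_star_dotProduct_mulVec_eq_sum]
  refine Finset.sum_nonneg fun i _ => ?_
  by_cases hi : hH.eigenvalues i < 0
  · simp [hH.star_eigenvectorUnitary_mulVec_apply_eq_zero hx (not_not.mpr hi)]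
  · exact mul_nonneg (not_lt.mp hi) (sq_nonneg _)

theorem finrank_le_card_eigenvalues_neg (W : Submodule 𝕜 (ι → 𝕜))
    (hW : ∀ x ∈ W, x ≠ 0 → RCLike.re (star x ⬝ᵥ (H *ᵥ x)) < 0) :
    finrank 𝕜 W ≤ Fintype.card {i // hH.eigenvalues i < 0} := by
  have hdisj : Disjoint W (hH.eigenvectorSpan (¬ hH.eigenvalues · < 0)) :=
    Submodule.disjoint_def.mpr fun x hxW hx => by_contra fun hx0 =>
      (hW x hxW hx0).not_ge (hH.re_star_dotProduct_mulVec_nonneg hx)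
  have := Submodule.finrank_add_finrank_le_of_disjoint hdisj
  rw [finrank_eigenvectorSpan, Fintype.card_subtype_compl, finrank_fintype_fun_eq_card] at this
  have := Fintype.card_subtype_le fun i => hH.eigenvalues i < 0
  omega

theorem card_eigenvalues_neg_mul_mul_conjTranspose_le (B : Matrix κ ι 𝕜) :
    Fintype.card {i // (isHermitian_mul_mul_conjTranspose B hH).eigenvalues i < 0} ≤
      Fintype.card {i // hH.eigenvalues i < 0} := by
  set hG := isHermitian_mul_mul_conjTranspose B hH
  have hform : ∀ x, star x ⬝ᵥ ((B * H * Bᴴ) *ᵥ x) = star (Bᴴ *ᵥ x) ⬝ᵥ (H *ᵥ (Bᴴ *ᵥ x)) := by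
    intro x
    simp only [star_mulVec, dotProduct_mulVec, vecMul_vecMul, conjTranspose_conjTranspose]
  set V := hG.eigenvectorSpan (hG.eigenvalues · < 0)
  have hneg : ∀ x ∈ V, x ≠ 0 → RCLike.re (star (Bᴴ *ᵥ x) ⬝ᵥ (H *ᵥ (Bᴴ *ᵥ x))) < 0 :=
    fun x hx hx0 => hform x ▸ hG.re_star_dotProduct_mulVec_neg hx hx0
  set L := (mulVecLin Bᴴ).domRestrict V
  have hinj : Function.Injective L := by
    refine (injective_iff_map_eq_zero L).mpr fun x hLx => by_contra fun hx0 => ?_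
    have hBx : Bᴴ *ᵥ (x : κ → 𝕜) = 0 := hLx
    simpa [hBx] using hneg x x.2 (Subtype.coe_ne_coe.mpr hx0)
  have hmap := LinearMap.finrank_range_of_inj hinj
  rw [LinearMap.range_domRestrict, hG.finrank_eigenvectorSpan] at hmap
  rw [← hmap]
  refine hH.finrank_le_card_eigenvalues_neg _ fun y hy hy0 => ?_
  obtain ⟨x, hx, rfl⟩ := Submodule.mem_map.mp hy
  exact hneg x hx (by rintro rfl; simp at hy0)

end Matrix.IsHermitian

section

variable {R r n : Type*} [CommRing R] [Fintype n]

theorem smul_nonsing_inv_smul_one_sub [DecidableEq n] (z : R) (A : Matrix n n R)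
    (hz : IsUnit (z • (1 : Matrix n n R) - A).det) :
    z • (z • (1 : Matrix n n R) - A)⁻¹ = 1 + (z • (1 : Matrix n n R) - A)⁻¹ * A := by
  have h := nonsing_inv_mul _ hz
  rw [mul_sub, Matrix.mul_smul, mul_one] at h
  exact sub_eq_iff_eq_add.mp h

theorem sub_one_sub_mul_mul_conjTranspose [StarRing R] [Fintype r] [DecidableEq r]
    (J : Matrix r r R) (hJJ : J * J = 1) (hJ : Jᴴ = J) (C X Y : Matrix r n R) :
    J - (1 - X * Cᴴ * J) * J * (1 - Y * Cᴴ * J)ᴴ = C * Yᴴ + X * Cᴴ - X * (Cᴴ * J * C) * Yᴴ := by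
  simp only [conjTranspose_sub, conjTranspose_one, conjTranspose_mul, conjTranspose_conjTranspose,
    hJ, sub_mul, mul_sub, one_mul, mul_one, Matrix.mul_assoc, hJJ]
  simp only [← Matrix.mul_assoc, hJJ, Matrix.one_mul, Matrix.mul_one]
  abel

theorem add_smul_mul_mul_eq (z w : R) (A A' Γ : Matrix n n R) (C : Matrix r n R) (D : Matrix n r R)
    (X : Matrix r n R) (Y : Matrix n r R)
    (hX : z • (X * Γ) = C + X * Γ * A) (hY : w • (Γ * Y) = D + A' * Γ * Y) :
    (z + w) • (X * Γ * Y) = C * Y + X * D + X * (Γ * A + A' * Γ) * Y := by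
  rw [add_smul, ← Matrix.smul_mul z (X * Γ) Y, hX, Matrix.mul_assoc X Γ Y,
    ← Matrix.mul_smul X w (Γ * Y), hY]
  simp only [Matrix.add_mul, Matrix.mul_add, Matrix.mul_assoc]
  abel

end

theorem signatureJ_mul_self (p m : ℕ) : signatureJ p m * signatureJ p m = 1 := by
  simp [signatureJ, fromBlocks_multiply, ← fromBlocks_one]

theorem signatureJ_conjTranspose (p m : ℕ) : (signatureJ p m)ᴴ = signatureJ p m := by
  simp [signatureJ, fromBlocks_conjTranspose]

theorem signatureJ_sub_ThetaRealization_mul_mul_conjTranspose {n p m : ℕ}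
    {A : Matrix (Fin n) (Fin n) ℂ} {C : Matrix (Fin p ⊕ Fin m) (Fin n) ℂ}
    {Γ : Matrix (Fin n) (Fin n) ℂ} (hΓH : Γ.IsHermitian) (hΓinv : IsUnit Γ.det)
    (hLyap : Γ * A + Aᴴ * Γ = -(Cᴴ * signatureJ p m * C)) {z w : ℂ}
    (hz : IsUnit (z • (1 : Matrix (Fin n) (Fin n) ℂ) - A).det)
    (hw : IsUnit (w • (1 : Matrix (Fin n) (Fin n) ℂ) - A).det) :
    signatureJ p m - ThetaRealization n p m A C Γ z * signatureJ p m *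
        (ThetaRealization n p m A C Γ w)ᴴ =
      (z + star w) • (C * (z • 1 - A)⁻¹ * Γ⁻¹ * Γ * (C * (w • 1 - A)⁻¹ * Γ⁻¹)ᴴ) := by
  have hresolvent : ∀ u : ℂ, IsUnit (u • (1 : Matrix (Fin n) (Fin n) ℂ) - A).det →
      u • (C * (u • 1 - A)⁻¹ * Γ⁻¹ * Γ) = C + C * (u • 1 - A)⁻¹ * Γ⁻¹ * Γ * A := by
    intro u hu
    rw [nonsing_inv_mul_cancel_right _ _ hΓinv, Matrix.mul_assoc, ← Matrix.mul_smul,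
      smul_nonsing_inv_smul_one_sub u A hu, Matrix.mul_add, Matrix.mul_one]
  have hresolvent_conj : star w • (Γ * (C * (w • 1 - A)⁻¹ * Γ⁻¹)ᴴ) =
      Cᴴ + Aᴴ * Γ * (C * (w • 1 - A)⁻¹ * Γ⁻¹)ᴴ := by
    simpa only [conjTranspose_smul, conjTranspose_add, conjTranspose_mul, hΓH.eq,
      Matrix.mul_assoc] using congrArg conjTranspose (hresolvent w hw)
  rw [ThetaRealization, ThetaRealization,
    sub_one_sub_mul_mul_conjTranspose _ (signatureJ_mul_self p m) (signatureJ_conjTranspose p m),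
    add_smul_mul_mul_eq _ _ _ _ _ _ _ _ _ (hresolvent z hz) hresolvent_conj, hLyap]
  simp only [Matrix.mul_neg, Matrix.neg_mul, sub_eq_add_neg]

/-- **Negative-squares bound for the kernel `K_{Θ,J}`.** For points `z₁,…,z_M` in the open
right half-plane at which `z_k I − A` is invertible, the block matrix with `(k,l)` block
`(J − Θ(z_k) J Θ(z_l)ᴴ)/(z_k + conj z_l)` is Hermitian and has at most `ν₋(Γ)` negative
eigenvalues. -/
theorem negative_squares_bound_K_Theta_J
    (n p m : ℕ) (A : Matrix (Fin n) (Fin n) ℂ)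
    (C : Matrix (Fin p ⊕ Fin m) (Fin n) ℂ) (Γ : Matrix (Fin n) (Fin n) ℂ)
    (hΓH : Γ.IsHermitian) (hΓinv : IsUnit Γ.det)
    (hLyap : Γ * A + Aᴴ * Γ = -(Cᴴ * signatureJ p m * C))
    (M : ℕ) (z : Fin M → ℂ) (hzre : ∀ k, 0 < (z k).re)
    (hzA : ∀ k, IsUnit ((z k) • (1 : Matrix (Fin n) (Fin n) ℂ) - A).det) :
    let G : Matrix (Fin M × (Fin p ⊕ Fin m)) (Fin M × (Fin p ⊕ Fin m)) ℂ :=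
      Matrix.of fun ki lj =>
        ((z ki.1 + star (z lj.1))⁻¹ •
          (signatureJ p m -
            ThetaRealization n p m A C Γ (z ki.1) * signatureJ p m *
              (ThetaRealization n p m A C Γ (z lj.1))ᴴ)) ki.2 lj.2
    ∃ hG : G.IsHermitian, negEigCount G hG ≤ negEigCount Γ hΓH := by
  intro G
  set B : Matrix (Fin M × (Fin p ⊕ Fin m)) (Fin n) ℂ :=
    Matrix.of fun ki a => (C * (z ki.1 • 1 - A)⁻¹ * Γ⁻¹) ki.2 a
  have hsum : ∀ k l, z k + star (z l) ≠ 0 := fun k l h => by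
    have := congrArg Complex.re h
    simp only [Complex.add_re, Complex.star_def, Complex.conj_re, Complex.zero_re] at this
    linarith [hzre k, hzre l]
  have hGB : G = B * Γ * Bᴴ := by
    ext ⟨k, i⟩ ⟨l, j⟩
    simp only [G, of_apply, signatureJ_sub_ThetaRealization_mul_mul_conjTranspose hΓH hΓinv hLyap
      (hzA k) (hzA l), inv_smul_smul₀ (hsum k l)]
    simp only [B, mul_apply, conjTranspose_apply, of_apply]
  rw [hGB]
  exact ⟨isHermitian_mul_mul_conjTranspose B hΓH,
    hΓH.card_eigenvalues_neg_mul_mul_conjTranspose_le B⟩
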